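/- Let 𝓐=(A,δ^A,σ^A,τ^A) be a fuzzy automaton over a complete residuated lattice 𝓛 and alphabet X, let E be a fuzzy equivalence relation on A, and let 𝓐/E be the factor fuzzy automaton. Define φ:A×(A/E)→L by φ(a₁,E_{a₂})=E(a₁,a₂). Then: (A) φ is a uniform fuzzy relation with E_A^φ = E and with co-kernel E_{A/E}^φ a fuzzy equality, and φ is both a forward simulation and a backward simulation between 𝓐 and 𝓐/E. (B) The following are equivalent: (i) E is a forward bisimulation on 𝓐; (ii) φ is a forward bisimulation between 𝓐 and 𝓐/E; (iii) φ is a backward-forward bisimulation between 𝓐 and 𝓐/E. -/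
import Mathlib


universe u

/-- A complete residuated lattice: a complete lattice with a commutative monoid
structure whose unit is the top element, together with a residuum operation
forming an adjoint pair with the multiplication. -/
class CompleteResiduatedLattice (L : Type*) extends CompleteLattice L, CommMonoid L where
  /-- the residuum operation `→` -/
  res : L → L → L
  /-- the adjunction property -/
  adjunction : ∀ x y z : L, x * y ≤ z ↔ x ≤ res y z
  /-- the multiplicative unit `1` is the greatest element -/
  one_eq_top : (1 : L) = ⊤

namespace FuzzyAutomataBisim

/-- A fuzzy automaton over `L` and alphabet `X`, with state set `A`. -/
structure FuzzyAutomaton (L : Type*) [CompleteResiduatedLattice L] (X A : Type*) where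
  δ : A → X → A → L
  σ : A → L
  τ : A → L

variable {L X A B C : Type*} [CompleteResiduatedLattice L]

/-- biresiduum `x ↔ y = (x → y) ⊓ (y → x)` -/
def bires (x y : L) : L :=
  CompleteResiduatedLattice.res x y ⊓ CompleteResiduatedLattice.res y x

/-- inverse of a fuzzy relation -/
def inv (φ : A → B → L) : B → A → L := fun b a => φ a b

/-- composition of fuzzy relations -/
def rcomp (φ : A → B → L) (ψ : B → C → L) : A → C → L := fun a c => ⨆ b, φ a b * ψ b c

/-- composition of a fuzzy set with a fuzzy relation -/
def scomp (f : A → L) (φ : A → B → L) : B → L := fun b => ⨆ a, f a * φ a b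

/-- composition of a fuzzy relation with a fuzzy set -/
def rscomp (φ : A → B → L) (g : B → L) : A → L := fun a => ⨆ b, φ a b * g b

/-- degree of overlapping of two fuzzy sets -/
def sdot (f g : A → L) : L := ⨆ a, f a * g a

/-- kernel `E_A^φ` of a fuzzy relation -/
def ker (φ : A → B → L) : A → A → L := fun a₁ a₂ => ⨅ b, bires (φ a₁ b) (φ a₂ b)

/-- co-kernel `E_B^φ` of a fuzzy relation -/
def coker (φ : A → B → L) : B → B → L := fun b₁ b₂ => ⨅ a, bires (φ a b₁) (φ a b₂)

/-- `φ` is an `L`-function -/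
def IsLFun (φ : A → B → L) : Prop := ∀ a, ∃ b, φ a b = 1

/-- `φ` is surjective, i.e. `φ⁻¹` is an `L`-function -/
def IsSurj (φ : A → B → L) : Prop := ∀ b, ∃ a, φ a b = 1

/-- `φ` is a partial fuzzy function: `φ ∘ φ⁻¹ ∘ φ ≤ φ` -/
def IsPFF (φ : A → B → L) : Prop := rcomp (rcomp φ (inv φ)) φ ≤ φ

/-- `φ` is a uniform fuzzy relation: a partial fuzzy function that is a
surjective `L`-function -/
def IsUniform (φ : A → B → L) : Prop := IsPFF φ ∧ IsLFun φ ∧ IsSurj φ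

/-- the set of crisp descriptions of `φ` -/
def CR (φ : A → B → L) : Set (A → B) := {ψ | ∀ a, φ a (ψ a) = 1}

/-- `ψ : A → B` is `F`-surjective -/
def SurjMod (F : B → B → L) (ψ : A → B) : Prop := ∀ b, ∃ a, F (ψ a) b = 1

/-- fuzzy equivalence relation -/
structure IsFuzzyEquiv (E : A → A → L) : Prop where
  refl : ∀ a, E a a = 1
  symm : ∀ a b, E a b = E b a
  trans : ∀ a b c, E a b * E b c ≤ E a c

/-- fuzzy equality -/
def IsFuzzyEquality (E : A → A → L) : Prop :=
  IsFuzzyEquiv E ∧ ∀ a b, E a b = 1 → a = b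

/-- the factor set `A/E = {E_a : a ∈ A}` -/
abbrev FactorSet (E : A → A → L) := {f : A → L // ∃ a, E a = f}

/-- the class `E_a` as an element of `A/E` -/
def toClass (E : A → A → L) (a : A) : FactorSet E := ⟨E a, a, rfl⟩

/-- a chosen representative of a class -/
noncomputable def rep {E : A → A → L} (c : FactorSet E) : A := c.2.choose

/-- the fuzzy relation `Ẽ` on `A/E` -/
noncomputable def tildeRel (E : A → A → L) : FactorSet E → FactorSet E → L :=
  fun c c' => E (rep c) (rep c')

open Classical in
/-- a chosen crisp description of `φ` -/
noncomputable def crispDesc [Nonempty B] (φ : A → B → L) : A → B :=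
  fun a => if h : ∃ b, φ a b = 1 then h.choose else Classical.arbitrary B

/-- the induced map `φ̃ : A/E_A^φ → B/E_B^φ`, `φ̃(E_a) = F_{ψ(a)}` -/
noncomputable def tilde [Nonempty B] (φ : A → B → L) :
    FactorSet (ker φ) → FactorSet (coker φ) :=
  fun c => toClass (coker φ) (crispDesc φ (rep c))

/-- the fuzzy transition relation `δ_x` -/
def FuzzyAutomaton.δx (M : FuzzyAutomaton L X A) (x : X) : A → A → L := fun a b => M.δ a x b

open Classical in
/-- transitions extended to words -/
noncomputable def deltaWord (M : FuzzyAutomaton L X A) : List X → A → A → L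
  | [] => fun a b => if a = b then (1 : L) else ⊥
  | x :: u => rcomp (M.δx x) (deltaWord M u)

/-- the fuzzy language recognized by `M` : `L(M)(u) = σ ∘ δ_u ∘ τ` -/
noncomputable def lang (M : FuzzyAutomaton L X A) (u : List X) : L :=
  sdot (scomp M.σ (deltaWord M u)) M.τ

/-- forward simulation -/
def IsForwardSim (MA : FuzzyAutomaton L X A) (MB : FuzzyAutomaton L X B)
    (φ : A → B → L) : Prop :=
  MA.σ ≤ scomp MB.σ (inv φ) ∧
  (∀ x, rcomp (inv φ) (MA.δx x) ≤ rcomp (MB.δx x) (inv φ)) ∧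
  rscomp (inv φ) MA.τ ≤ MB.τ

/-- backward simulation -/
def IsBackwardSim (MA : FuzzyAutomaton L X A) (MB : FuzzyAutomaton L X B)
    (φ : A → B → L) : Prop :=
  scomp MA.σ φ ≤ MB.σ ∧
  (∀ x, rcomp (MA.δx x) φ ≤ rcomp φ (MB.δx x)) ∧
  MA.τ ≤ rscomp φ MB.τ

/-- forward bisimulation -/
def IsForwardBisim (MA : FuzzyAutomaton L X A) (MB : FuzzyAutomaton L X B)
    (φ : A → B → L) : Prop :=
  IsForwardSim MA MB φ ∧ IsForwardSim MB MA (inv φ)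

/-- backward bisimulation -/
def IsBackwardBisim (MA : FuzzyAutomaton L X A) (MB : FuzzyAutomaton L X B)
    (φ : A → B → L) : Prop :=
  IsBackwardSim MA MB φ ∧ IsBackwardSim MB MA (inv φ)

/-- backward-forward bisimulation -/
def IsBFBisim (MA : FuzzyAutomaton L X A) (MB : FuzzyAutomaton L X B)
    (φ : A → B → L) : Prop :=
  IsBackwardSim MA MB φ ∧ IsForwardSim MB MA (inv φ)

/-- forward-backward bisimulation -/
def IsFBBisim (MA : FuzzyAutomaton L X A) (MB : FuzzyAutomaton L X B)
    (φ : A → B → L) : Prop :=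
  IsForwardSim MA MB φ ∧ IsBackwardSim MB MA (inv φ)

/-- isomorphism of fuzzy automata -/
def IsIso (MA : FuzzyAutomaton L X A) (MB : FuzzyAutomaton L X B) (h : A → B) : Prop :=
  Function.Bijective h ∧
  (∀ (a₁ : A) (x : X) (a₂ : A), MA.δ a₁ x a₂ = MB.δ (h a₁) x (h a₂)) ∧
  (∀ a, MA.σ a = MB.σ (h a)) ∧
  (∀ a, MA.τ a = MB.τ (h a))

/-- the factor fuzzy automaton `𝓐/E` -/
noncomputable def factorAut (M : FuzzyAutomaton L X A) (E : A → A → L) :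
    FuzzyAutomaton L X (FactorSet E) where
  δ := fun c x c' => rcomp (rcomp E (M.δx x)) E (rep c) (rep c')
  σ := fun c => scomp M.σ E (rep c)
  τ := fun c => rscomp E M.τ (rep c)

/-- the natural fuzzy relation `φ(a₁, E_{a₂}) = E(a₁,a₂)` between `A` and `A/E` -/
def natRel (E : A → A → L) : A → FactorSet E → L := fun a c => c.1 a

/-- the fuzzy relation `G/E` on `A/E` -/
noncomputable def quotRel (E G : A → A → L) : FactorSet E → FactorSet E → L :=
  fun c c' => G (rep c) (rep c')

/-- the fuzzy relation `φ(a₁, E_{a₂}) = G(a₁,a₂)` between `A` and `A/E` -/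
noncomputable def quotNatRel (E G : A → A → L) : A → FactorSet E → L :=
  fun a c => G a (rep c)

/-- UFB-equivalence of fuzzy automata -/
def UFBEquiv (MA : FuzzyAutomaton L X A) (MB : FuzzyAutomaton L X B) : Prop :=
  ∃ φ : A → B → L, IsUniform φ ∧ IsForwardBisim MA MB φ

section Aux

open CompleteResiduatedLattice

variable {L : Type*} [CompleteResiduatedLattice L]

lemma le_one' (x : L) : x ≤ 1 := by
  rw [CompleteResiduatedLattice.one_eq_top]; exact le_top

lemma mul_le_mul'' {x y : L} (h : x ≤ y) (z : L) : x * z ≤ y * z := by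
  have h1 : y ≤ res z (y * z) := (adjunction y z (y * z)).1 le_rfl
  exact (adjunction x z (y * z)).2 (le_trans h h1)

lemma mul_le_mul_left'' {x y : L} (h : x ≤ y) (z : L) : z * x ≤ z * y := by
  rw [mul_comm z x, mul_comm z y]; exact mul_le_mul'' h z

lemma mul_le_left'' (x y : L) : x * y ≤ x := by
  calc x * y ≤ x * 1 := mul_le_mul_left'' (le_one' y) x
    _ = x := mul_one x

lemma res_eq_one_of_le {x y : L} (h : x ≤ y) : res x y = 1 := by
  have h1 : (1 : L) ≤ res x y := (adjunction 1 x y).1 (by rwa [one_mul])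
  exact le_antisymm (le_one' _) h1

lemma le_of_res_eq_one {x y : L} (h : res x y = 1) : x ≤ y := by
  have h1 : (1 : L) * x ≤ y := (adjunction 1 x y).2 (le_of_eq h.symm)
  rwa [one_mul] at h1

lemma mul_res_le (x y : L) : x * res x y ≤ y := by
  rw [mul_comm]; exact (adjunction _ x y).2 le_rfl

lemma le_bires {z x y : L} (h1 : z * x ≤ y) (h2 : z * y ≤ x) : z ≤ bires x y :=
  le_inf ((adjunction z x y).1 h1) ((adjunction z y x).1 h2)

lemma bires_one_left (x : L) : bires 1 x = x := by
  unfold bires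
  have h1 : res 1 x = x := by
    apply le_antisymm
    · have := mul_res_le (1 : L) x; rwa [one_mul] at this
    · exact (adjunction x 1 x).1 (by rw [mul_one])
  rw [h1, res_eq_one_of_le (le_one' x)]
  exact inf_eq_left.mpr (le_one' x)

lemma eq_of_bires_eq_one {x y : L} (h : bires x y = 1) : x = y := by
  have h1 : res x y = 1 := le_antisymm (le_one' _) (le_of_eq h.symm |>.trans inf_le_left)
  have h2 : res y x = 1 := le_antisymm (le_one' _) (le_of_eq h.symm |>.trans inf_le_right)
  exact le_antisymm (le_of_res_eq_one h1) (le_of_res_eq_one h2)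

lemma iSup_mul_le {ι : Sort*} {f : ι → L} {x y : L} (h : ∀ i, f i * x ≤ y) :
    (⨆ i, f i) * x ≤ y :=
  (adjunction _ x y).2 (iSup_le fun i => (adjunction _ x y).1 (h i))

lemma mul_iSup_le {ι : Sort*} {f : ι → L} {x y : L} (h : ∀ i, x * f i ≤ y) :
    x * (⨆ i, f i) ≤ y := by
  rw [mul_comm]; exact iSup_mul_le fun i => by rw [mul_comm]; exact h i

lemma iSup_mul' {ι : Sort*} (f : ι → L) (x : L) : (⨆ i, f i) * x = ⨆ i, f i * x :=
  le_antisymm (iSup_mul_le fun i => le_iSup (fun i => f i * x) i)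
    (iSup_le fun i => mul_le_mul'' (le_iSup f i) x)

lemma mul_iSup' {ι : Sort*} (x : L) (f : ι → L) : x * (⨆ i, f i) = ⨆ i, x * f i := by
  rw [mul_comm, iSup_mul']; simp only [mul_comm]

end Aux
set_option linter.unusedSectionVars false
set_option linter.unusedVariables false
section Aux2

variable {L A : Type*} [CompleteResiduatedLattice L]

lemma rep_spec {E : A → A → L} (c : FactorSet E) : E (rep c) = c.1 := c.2.choose_spec

lemma natRel_apply {E : A → A → L} (a : A) (c : FactorSet E) :
    natRel E a c = E (rep c) a := by
  rw [natRel, ← rep_spec c]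

lemma eclass_eq {E : A → A → L} (hE : IsFuzzyEquiv E) {a b : A} (h : E a b = 1) :
    E a = E b := by
  funext x
  apply le_antisymm
  · have h1 := hE.trans b a x
    rw [hE.symm b a, h, one_mul] at h1
    exact h1
  · have h1 := hE.trans a b x
    rw [h, one_mul] at h1
    exact h1

lemma natRel_toClass {E : A → A → L} (hE : IsFuzzyEquiv E) (a : A) :
    natRel E a (toClass E a) = 1 := hE.refl a

lemma E_rep_toClass {E : A → A → L} (hE : IsFuzzyEquiv E) (a b : A) :
    E (rep (toClass E a)) b = E a b :=
  congrFun (rep_spec (toClass E a)) b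

lemma ker_natRel {E : A → A → L} (hE : IsFuzzyEquiv E) : ker (natRel E) = E := by
  funext a₁ a₂
  apply le_antisymm
  · refine le_trans (iInf_le _ (toClass E a₁)) ?_
    have h1 : natRel E a₁ (toClass E a₁) = 1 := natRel_toClass hE a₁
    have h2 : natRel E a₂ (toClass E a₁) = E a₁ a₂ := rfl
    rw [h1, h2, bires_one_left]
  · refine le_iInf fun c => ?_
    rw [natRel_apply, natRel_apply]
    refine le_bires ?_ ?_
    · rw [mul_comm]; exact hE.trans _ _ _
    · rw [mul_comm]
      calc E (rep c) a₂ * E a₁ a₂ = E (rep c) a₂ * E a₂ a₁ := by rw [hE.symm a₁ a₂]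
        _ ≤ E (rep c) a₁ := hE.trans _ _ _

lemma coker_natRel {E : A → A → L} (hE : IsFuzzyEquiv E) (c c' : FactorSet E) :
    coker (natRel E) c c' = E (rep c) (rep c') := by
  apply le_antisymm
  · refine le_trans (iInf_le _ (rep c)) ?_
    rw [natRel_apply, natRel_apply, hE.refl, bires_one_left, hE.symm]
  · refine le_iInf fun a => ?_
    rw [natRel_apply, natRel_apply]
    refine le_bires ?_ ?_
    · rw [hE.symm (rep c) (rep c')]; exact hE.trans _ _ _
    · exact hE.trans _ _ _

lemma coker_equality {E : A → A → L} (hE : IsFuzzyEquiv E) :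
    IsFuzzyEquality (coker (natRel E)) := by
  constructor
  · constructor
    · intro c; rw [coker_natRel hE]; exact hE.refl _
    · intro c c'; rw [coker_natRel hE, coker_natRel hE]; exact hE.symm _ _
    · intro c c' c''; rw [coker_natRel hE, coker_natRel hE, coker_natRel hE]
      exact hE.trans _ _ _
  · intro c c' h
    rw [coker_natRel hE] at h
    apply Subtype.ext
    rw [← rep_spec c, ← rep_spec c']
    exact eclass_eq hE h

lemma natRel_uniform {E : A → A → L} (hE : IsFuzzyEquiv E) : IsUniform (natRel E) := by
  refine ⟨?_, fun a => ⟨toClass E a, natRel_toClass hE a⟩,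
    fun c => ⟨rep c, by rw [natRel_apply]; exact hE.refl _⟩⟩
  intro a
  intro c
  simp only [rcomp, inv]
  refine iSup_le fun b => ?_
  refine iSup_mul_le fun c' => ?_
  rw [natRel_apply, natRel_apply, natRel_apply, natRel_apply]
  have h1 : E (rep c') a * E (rep c') b ≤ E a b := by
    rw [hE.symm (rep c') a]; exact hE.trans _ _ _
  calc E (rep c') a * E (rep c') b * E (rep c) b ≤ E a b * E (rep c) b :=
        mul_le_mul'' h1 _
    _ = E (rep c) b * E b a := by rw [mul_comm, hE.symm a b]
    _ ≤ E (rep c) a := hE.trans _ _ _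

end Aux2
section Aux3
set_option linter.unusedSectionVars false

variable {L X A : Type*} [CompleteResiduatedLattice L]

lemma natRel_fwd (MA : FuzzyAutomaton L X A) {E : A → A → L} (hE : IsFuzzyEquiv E) :
    IsForwardSim MA (factorAut MA E) (natRel E) := by
  refine ⟨?_, ?_, ?_⟩
  · intro a
    simp only [scomp, inv, factorAut]
    refine le_iSup_of_le (toClass E a) ?_
    rw [natRel_apply, E_rep_toClass hE, hE.refl a, mul_one]
    refine le_iSup_of_le a ?_
    rw [hE.symm a _, E_rep_toClass hE, hE.refl a, mul_one]
  · intro x c a'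
    simp only [rcomp, inv, factorAut, FuzzyAutomaton.δx]
    refine iSup_le fun a => ?_
    refine le_iSup_of_le (toClass E a') ?_
    rw [natRel_apply a', E_rep_toClass hE, hE.refl a', mul_one, natRel_apply]
    refine le_iSup_of_le a' ?_
    have h2 : E a' (rep (toClass E a')) = 1 := by
      rw [hE.symm, E_rep_toClass hE, hE.refl]
    refine le_trans (le_of_eq ?_) (mul_le_mul'' (le_iSup _ a) _)
    rw [h2, mul_one]
  · intro c
    simp only [rscomp, inv, factorAut]
    refine iSup_le fun a => ?_
    refine le_iSup_of_le a ?_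
    rw [natRel_apply]

lemma natRel_bwd (MA : FuzzyAutomaton L X A) {E : A → A → L} (hE : IsFuzzyEquiv E) :
    IsBackwardSim MA (factorAut MA E) (natRel E) := by
  refine ⟨?_, ?_, ?_⟩
  · intro c
    simp only [scomp, factorAut]
    refine iSup_le fun a => ?_
    refine le_iSup_of_le a ?_
    rw [natRel_apply, hE.symm (rep c) a]
  · intro x a c
    simp only [rcomp, factorAut, FuzzyAutomaton.δx]
    refine iSup_le fun a' => ?_
    refine le_iSup_of_le (toClass E a) ?_
    rw [natRel_apply a, E_rep_toClass hE, hE.refl a, one_mul, natRel_apply]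
    refine le_iSup_of_le a' ?_
    refine le_trans (le_of_eq ?_) (mul_le_mul'' (le_iSup _ a) _)
    rw [E_rep_toClass hE, hE.refl a, one_mul, hE.symm (rep c) a']
  · intro a
    simp only [rscomp, factorAut]
    refine le_iSup_of_le (toClass E a) ?_
    rw [natRel_apply, E_rep_toClass hE, hE.refl a, one_mul]
    refine le_iSup_of_le a ?_
    rw [E_rep_toClass hE, hE.refl a, one_mul]

lemma cond1E (MA : FuzzyAutomaton L X A) {E : A → A → L} (hE : IsFuzzyEquiv E) :
    MA.σ ≤ scomp MA.σ (inv E) := by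
  intro a
  simp only [scomp, inv]
  refine le_iSup_of_le a ?_
  rw [hE.refl a, mul_one]

lemma cond1B (MA : FuzzyAutomaton L X A) {E : A → A → L} (hE : IsFuzzyEquiv E) :
    (factorAut MA E).σ ≤ scomp MA.σ (natRel E) := by
  intro c
  simp only [scomp, factorAut]
  refine iSup_le fun a => ?_
  refine le_iSup_of_le a ?_
  rw [natRel_apply, hE.symm a (rep c)]

lemma cond2_iff (MA : FuzzyAutomaton L X A) {E : A → A → L} (hE : IsFuzzyEquiv E) :
    (∀ x, rcomp (natRel E) ((factorAut MA E).δx x) ≤ rcomp (MA.δx x) (natRel E)) ↔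
    (∀ x, rcomp E (MA.δx x) ≤ rcomp (MA.δx x) E) := by
  constructor
  · intro h x a b
    have hh := h x a (toClass E b)
    simp only [rcomp, factorAut, FuzzyAutomaton.δx] at hh ⊢
    refine iSup_le fun p => ?_
    have step1 : E a p * MA.δ p x b ≤
        ⨆ c', natRel E a c' * ⨆ q, (⨆ p', E (rep c') p' * MA.δ p' x q) *
          E q (rep (toClass E b)) := by
      refine le_iSup_of_le (toClass E a) ?_
      rw [natRel_apply, E_rep_toClass hE, hE.refl a, one_mul]
      refine le_iSup_of_le b ?_
      have hb : E b (rep (toClass E b)) = 1 := by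
        rw [hE.symm, E_rep_toClass hE, hE.refl]
      rw [hb, mul_one]
      refine le_iSup_of_le p (le_of_eq ?_)
      rw [E_rep_toClass hE]
    refine le_trans step1 (le_trans hh ?_)
    refine iSup_le fun q => ?_
    refine le_iSup_of_le q ?_
    rw [natRel_apply, E_rep_toClass hE, hE.symm b q]
  · intro h x a c
    simp only [rcomp, factorAut, FuzzyAutomaton.δx]
    refine iSup_le fun c' => ?_
    rw [natRel_apply, mul_iSup']
    refine iSup_le fun q => ?_
    rw [iSup_mul', mul_iSup']
    refine iSup_le fun p => ?_
    have hab : E (rep c') a * E (rep c') p ≤ E a p := by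
      rw [hE.symm (rep c') a]; exact hE.trans _ _ _
    have h1 : E (rep c') a * (E (rep c') p * MA.δ p x q * E q (rep c)) ≤
        E a p * MA.δ p x q * E q (rep c) := by
      rw [← mul_assoc, ← mul_assoc]
      exact mul_le_mul'' (mul_le_mul'' hab _) _
    refine le_trans h1 ?_
    have h2 : E a p * MA.δ p x q ≤ ⨆ b', MA.δ a x b' * E b' q :=
      le_trans (le_iSup_of_le p le_rfl) (h x a q)
    refine le_trans (mul_le_mul'' h2 _) ?_
    rw [iSup_mul']
    refine iSup_le fun b' => ?_
    refine le_iSup_of_le b' ?_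
    rw [natRel_apply, mul_assoc]
    refine mul_le_mul_left'' ?_ _
    rw [hE.symm (rep c) b']
    exact hE.trans _ _ _

lemma cond3_iff (MA : FuzzyAutomaton L X A) {E : A → A → L} (hE : IsFuzzyEquiv E) :
    rscomp (natRel E) (factorAut MA E).τ ≤ MA.τ ↔ rscomp E MA.τ ≤ MA.τ := by
  constructor
  · intro h a
    simp only [rscomp]
    refine iSup_le fun b => ?_
    refine le_trans ?_ (h a)
    simp only [rscomp, factorAut]
    refine le_iSup_of_le (toClass E a) ?_
    rw [natRel_apply, E_rep_toClass hE, hE.refl a, one_mul]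
    refine le_iSup_of_le b (le_of_eq ?_)
    rw [E_rep_toClass hE]
  · intro h a
    simp only [rscomp, factorAut]
    refine iSup_le fun c => ?_
    rw [natRel_apply, mul_iSup']
    refine iSup_le fun b => ?_
    refine le_trans ?_ (h a)
    refine le_iSup_of_le b ?_
    rw [← mul_assoc]
    refine mul_le_mul'' ?_ _
    rw [hE.symm (rep c) a]; exact hE.trans _ _ _

end Aux3
/-- the natural uniform fuzzy relation between `𝓐` and `𝓐/E` -/
theorem natRel_props {L X A : Type*} [CompleteResiduatedLattice L] [Nonempty A]
    (MA : FuzzyAutomaton L X A) (E : A → A → L) (hE : IsFuzzyEquiv E) :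
    (IsUniform (natRel E) ∧
     ker (natRel E) = E ∧
     IsFuzzyEquality (coker (natRel E)) ∧
     IsForwardSim MA (factorAut MA E) (natRel E) ∧
     IsBackwardSim MA (factorAut MA E) (natRel E)) ∧
    ((IsForwardBisim MA MA E ↔ IsForwardBisim MA (factorAut MA E) (natRel E)) ∧
     (IsForwardBisim MA MA E ↔ IsBFBisim MA (factorAut MA E) (natRel E))) := by
  have hIE : inv E = E := funext fun a => funext fun b => hE.symm b a
  have key : IsForwardBisim MA MA E ↔
      IsForwardSim (factorAut MA E) MA (inv (natRel E)) := by
    constructor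
    · rintro ⟨⟨-, h2, h3⟩, -⟩
      rw [hIE] at h2 h3
      exact ⟨cond1B MA hE, fun x => (cond2_iff MA hE).2 h2 x, (cond3_iff MA hE).2 h3⟩
    · rintro ⟨-, h2, h3⟩
      have h2' := (cond2_iff MA hE).1 h2
      have h3' := (cond3_iff MA hE).1 h3
      have sim : IsForwardSim MA MA E := by
        refine ⟨cond1E MA hE, ?_, ?_⟩
        · rw [hIE]; exact h2'
        · rw [hIE]; exact h3'
      exact ⟨sim, by rw [hIE]; exact sim⟩
  refine ⟨⟨natRel_uniform hE, ker_natRel hE, coker_equality hE,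
    natRel_fwd MA hE, natRel_bwd MA hE⟩, ?_, ?_⟩
  · exact key.trans ⟨fun h => ⟨natRel_fwd MA hE, h⟩, fun h => h.2⟩
  · exact key.trans ⟨fun h => ⟨natRel_bwd MA hE, h⟩, fun h => h.2⟩

end FuzzyAutomataBisim
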